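/- Let D=(E,𝓕) and D̃=(Ẽ,𝓕̃) be delta-matroids with E∩Ẽ=∅. Then the twist polynomial of the direct sum D⊕D̃ equals the product of the twist polynomials of D and D̃; equivalently, for every natural number k, the number of subsets A⊆E∪Ẽ with w((D⊕D̃)*A)=k equals Σ_{i+j=k} (number of B⊆E with w(D*B)=i)·(number of B̃⊆Ẽ with w(D̃*B̃)=j). -/

import Mathlib

open Finset
open scoped symmDiff

noncomputable section

namespace DeltaMatroid

variable {α : Type*} [DecidableEq α]

/-- A delta-matroid on ground set `E` with feasible sets `F`: `F` is nonempty, consists of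
subsets of `E`, and satisfies the symmetric exchange axiom. -/
def IsDeltaMatroid (E : Finset α) (F : Finset (Finset α)) : Prop :=
  F.Nonempty ∧ (∀ X ∈ F, X ⊆ E) ∧
    ∀ X ∈ F, ∀ Y ∈ F, ∀ u ∈ X ∆ Y, ∃ v ∈ X ∆ Y, X ∆ ({u, v} : Finset α) ∈ F

/-- The twist `D * A` of the feasible sets by a subset `A`. -/
def twist (F : Finset (Finset α)) (A : Finset α) : Finset (Finset α) :=
  F.image fun X => A ∆ X

/-- Maximum cardinality of a feasible set. -/
def maxCard (F : Finset (Finset α)) : ℕ := F.sup Finset.card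

/-- Minimum cardinality of a feasible set. -/
def minCard (F : Finset (Finset α)) : ℕ := sInf (Finset.card '' (F : Set (Finset α)))

/-- The width `w(D)`. -/
def width (F : Finset (Finset α)) : ℕ := maxCard F - minCard F

/-- Feasible sets of minimum cardinality. -/
def Fmin (F : Finset (Finset α)) : Finset (Finset α) := F.filter fun X => X.card = minCard F

/-- Feasible sets of maximum cardinality. -/
def Fmax (F : Finset (Finset α)) : Finset (Finset α) := F.filter fun X => X.card = maxCard F

/-- `e` is a ribbon loop: it lies in no minimum-cardinality feasible set. -/
def IsRibbonLoop (F : Finset (Finset α)) (e : α) : Prop := ∀ X ∈ Fmin F, e ∉ X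

/-- A ribbon loop is non-orientable if it is also a ribbon loop of `D * e`. -/
def IsNonorientableRibbonLoop (F : Finset (Finset α)) (e : α) : Prop :=
  IsRibbonLoop F e ∧ IsRibbonLoop (twist F {e}) e

/-- A ribbon loop is orientable if it is not a ribbon loop of `D * e`. -/
def IsOrientableRibbonLoop (F : Finset (Finset α)) (e : α) : Prop :=
  IsRibbonLoop F e ∧ ¬ IsRibbonLoop (twist F {e}) e

/-- `e` is a loop: it lies in no feasible set. -/
def IsLoop (F : Finset (Finset α)) (e : α) : Prop := ∀ X ∈ F, e ∉ X

/-- `e` is a coloop: it lies in every feasible set. -/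
def IsColoop (F : Finset (Finset α)) (e : α) : Prop := ∀ X ∈ F, e ∈ X

/-- Contraction `D / e`. -/
def contract (F : Finset (Finset α)) (e : α) : Finset (Finset α) :=
  if ∀ X ∈ F, e ∉ X then F
  else (F.filter fun X => e ∈ X).image fun X => X.erase e

/-- Deletion `D \ e`. -/
def delete (F : Finset (Finset α)) (e : α) : Finset (Finset α) :=
  if ∀ X ∈ F, e ∈ X then F.image fun X => X.erase e
  else F.filter fun X => e ∉ X

/-- Deletion of every element of `A` (in some order; the order does not matter). -/
def deleteSet (F : Finset (Finset α)) (A : Finset α) : Finset (Finset α) :=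
  A.toList.foldl delete F

/-- The restriction `D |_A = D \ (E \ A)` of a delta-matroid with ground set `E`. -/
def restrict (F : Finset (Finset α)) (E A : Finset α) : Finset (Finset α) :=
  deleteSet F (E \ A)

/-- Feasible sets of the direct sum `D ⊕ D'`. -/
def directSum (F G : Finset (Finset α)) : Finset (Finset α) :=
  (F ×ˢ G).image fun p => p.1 ∪ p.2

/-- A delta-matroid is connected if it is not a direct sum of two delta-matroids on
nonempty ground sets. -/
def IsConnected (E : Finset α) (F : Finset (Finset α)) : Prop :=
  ¬ ∃ (E₁ E₂ : Finset α) (F₁ F₂ : Finset (Finset α)),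
      E₁.Nonempty ∧ E₂.Nonempty ∧ Disjoint E₁ E₂ ∧ E = E₁ ∪ E₂ ∧
      IsDeltaMatroid E₁ F₁ ∧ IsDeltaMatroid E₂ F₂ ∧ F = directSum F₁ F₂

/-- A delta-matroid is even if all feasible sets have the same parity of cardinality. -/
def IsEvenDM (F : Finset (Finset α)) : Prop :=
  ∀ X ∈ F, ∀ Y ∈ F, X.card % 2 = Y.card % 2

variable {ι : Type*} [Fintype ι] [DecidableEq ι]

/-- The feasible sets of `D(C)`: subsets `A` whose principal submatrix `C[A]` is nonsingular
(over `GF(2)`, i.e. has nonzero determinant); `C[∅]` is nonsingular by convention. -/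
def binaryFeasible (C : Matrix ι ι (ZMod 2)) : Finset (Finset ι) :=
  Finset.univ.filter fun A =>
    (C.submatrix (fun x : {a // a ∈ A} => (x : ι)) (fun x : {a // a ∈ A} => (x : ι))).det ≠ 0

/-- The (simple-graph part of the) intersection graph `G_D` of a normal binary delta-matroid
`D(C)`: distinct `u, v` adjacent iff `C u v = 1`.  Loops are recorded by the diagonal of `C`. -/
def interGraph (C : Matrix ι ι (ZMod 2)) : SimpleGraph ι :=
  SimpleGraph.fromRel fun u v => C u v = 1

/-!
Twisting `D ⊕ D̃` by `B ∪ B̃` (with `B ⊆ E`, `B̃ ⊆ Ẽ`) gives `D * B ⊕ D̃ * B̃`. Feasible sets of the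
two summands are disjoint, so maximum and minimum cardinalities, hence widths, add:
`w((D ⊕ D̃) * (B ∪ B̃)) = w(D * B) + w(D̃ * B̃)`. Since `A ↦ (A ∩ E, A ∩ Ẽ)` is a bijection from the
subsets of `E ∪ Ẽ` to pairs of subsets, counting subsets by width gives the convolution.
-/

theorem symmDiff_union_union {A B X Y : Finset α} (h : Disjoint (A ∪ X) (B ∪ Y)) :
    (A ∪ B) ∆ (X ∪ Y) = A ∆ X ∪ B ∆ Y := by
  ext a
  have hab : a ∈ A ∪ X → a ∉ B ∪ Y := fun ha => disjoint_left.mp h ha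
  simp only [mem_symmDiff, mem_union] at hab ⊢
  tauto

theorem subset_of_mem_twist {F : Finset (Finset α)} {E A X : Finset α}
    (hF : ∀ Y ∈ F, Y ⊆ E) (hA : A ⊆ E) (hX : X ∈ twist F A) : X ⊆ E := by
  obtain ⟨Y, hY, rfl⟩ := mem_image.mp hX
  exact symmDiff_le_sup.trans (union_subset hA (hF Y hY))

theorem twist_union_directSum {E E' B B' : Finset α} {F F' : Finset (Finset α)}
    (hF : ∀ X ∈ F, X ⊆ E) (hF' : ∀ X ∈ F', X ⊆ E') (hB : B ⊆ E) (hB' : B' ⊆ E')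
    (hdisj : Disjoint E E') :
    twist (directSum F F') (B ∪ B') = directSum (twist F B) (twist F' B') := by
  rw [twist, directSum, directSum, twist, twist, ← prodMap_image_product, image_image,
    image_image]
  refine image_congr fun p hp => ?_
  obtain ⟨hX, hY⟩ := mem_product.mp hp
  exact symmDiff_union_union
    (hdisj.mono (union_subset hB (hF _ hX)) (union_subset hB' (hF' _ hY)))

section Card

omit [DecidableEq α]

theorem minCard_le {F : Finset (Finset α)} {X : Finset α} (hX : X ∈ F) : minCard F ≤ X.card :=
  Nat.sInf_le ⟨X, hX, rfl⟩

theorem exists_card_eq_minCard {F : Finset (Finset α)} (hF : F.Nonempty) :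
    ∃ X ∈ F, X.card = minCard F :=
  Nat.sInf_mem (hF.to_set.image card)

theorem le_maxCard {F : Finset (Finset α)} {X : Finset α} (hX : X ∈ F) : X.card ≤ maxCard F :=
  le_sup hX

theorem exists_card_eq_maxCard {F : Finset (Finset α)} (hF : F.Nonempty) :
    ∃ X ∈ F, X.card = maxCard F :=
  (exists_mem_eq_sup F hF card).imp fun _ h => ⟨h.1, h.2.symm⟩

theorem minCard_le_maxCard {F : Finset (Finset α)} (hF : F.Nonempty) : minCard F ≤ maxCard F :=
  let ⟨_, hX, hXc⟩ := exists_card_eq_minCard hF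
  hXc ▸ le_maxCard hX

end Card

section DirectSum

variable {F F' : Finset (Finset α)}

theorem mem_directSum {Z : Finset α} :
    Z ∈ directSum F F' ↔ ∃ X ∈ F, ∃ Y ∈ F', X ∪ Y = Z := by
  simp [directSum, and_assoc, exists_and_left]

theorem union_mem_directSum {X Y : Finset α} (hX : X ∈ F) (hY : Y ∈ F') :
    X ∪ Y ∈ directSum F F' :=
  mem_directSum.mpr ⟨X, hX, Y, hY, rfl⟩

theorem directSum_nonempty (hF : F.Nonempty) (hF' : F'.Nonempty) : (directSum F F').Nonempty :=
  (hF.product hF').image _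

variable (hF : F.Nonempty) (hF' : F'.Nonempty) (h : ∀ X ∈ F, ∀ Y ∈ F', Disjoint X Y)
include hF hF' h

theorem maxCard_directSum : maxCard (directSum F F') = maxCard F + maxCard F' := by
  refine le_antisymm (Finset.sup_le fun Z hZ => ?_) ?_
  · obtain ⟨X, hX, Y, hY, rfl⟩ := mem_directSum.mp hZ
    rw [card_union_of_disjoint (h X hX Y hY)]
    exact add_le_add (le_maxCard hX) (le_maxCard hY)
  · obtain ⟨X, hX, hXc⟩ := exists_card_eq_maxCard hF
    obtain ⟨Y, hY, hYc⟩ := exists_card_eq_maxCard hF'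
    rw [← hXc, ← hYc, ← card_union_of_disjoint (h X hX Y hY)]
    exact le_maxCard (union_mem_directSum hX hY)

theorem minCard_directSum : minCard (directSum F F') = minCard F + minCard F' := by
  refine le_antisymm ?_ ?_
  · obtain ⟨X, hX, hXc⟩ := exists_card_eq_minCard hF
    obtain ⟨Y, hY, hYc⟩ := exists_card_eq_minCard hF'
    rw [← hXc, ← hYc, ← card_union_of_disjoint (h X hX Y hY)]
    exact minCard_le (union_mem_directSum hX hY)
  · obtain ⟨Z, hZ, hZc⟩ := exists_card_eq_minCard (directSum_nonempty hF hF')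
    obtain ⟨X, hX, Y, hY, rfl⟩ := mem_directSum.mp hZ
    rw [← hZc, card_union_of_disjoint (h X hX Y hY)]
    exact add_le_add (minCard_le hX) (minCard_le hY)

theorem width_directSum : width (directSum F F') = width F + width F' := by
  have := minCard_le_maxCard hF
  have := minCard_le_maxCard hF'
  rw [width, width, width, maxCard_directSum hF hF' h, minCard_directSum hF hF' h]
  omega

end DirectSum

theorem width_twist_union_directSum {E E' B B' : Finset α} {F F' : Finset (Finset α)}
    (hF : F.Nonempty) (hF' : F'.Nonempty) (hFE : ∀ X ∈ F, X ⊆ E) (hF'E : ∀ X ∈ F', X ⊆ E')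
    (hB : B ⊆ E) (hB' : B' ⊆ E') (hdisj : Disjoint E E') :
    width (twist (directSum F F') (B ∪ B')) = width (twist F B) + width (twist F' B') := by
  rw [twist_union_directSum hFE hF'E hB hB' hdisj]
  exact width_directSum (hF.image _) (hF'.image _) fun X hX Y hY =>
    hdisj.mono (subset_of_mem_twist hFE hB hX) (subset_of_mem_twist hF'E hB' hY)

theorem card_filter_powerset_union {E E' : Finset α} (hdisj : Disjoint E E')
    (P : Finset α → Prop) [DecidablePred P] :
    #{A ∈ (E ∪ E').powerset | P A} = #{p ∈ E.powerset ×ˢ E'.powerset | P (p.1 ∪ p.2)} := by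
  refine (card_nbij' (fun p => p.1 ∪ p.2) (fun A => (A ∩ E, A ∩ E')) ?_ ?_ ?_ ?_).symm
  · rintro ⟨B, B'⟩ hp
    simp only [coe_filter, mem_product, mem_powerset, Set.mem_ofPred_eq] at hp ⊢
    exact ⟨union_subset_union hp.1.1 hp.1.2, hp.2⟩
  · intro A hA
    simp only [coe_filter, mem_product, mem_powerset, Set.mem_ofPred_eq] at hA ⊢
    refine ⟨⟨inter_subset_right, inter_subset_right⟩, ?_⟩
    rw [← inter_union_distrib_left, inter_eq_left.mpr hA.1]
    exact hA.2
  · rintro ⟨B, B'⟩ hp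
    simp only [coe_filter, mem_product, mem_powerset, Set.mem_ofPred_eq] at hp
    obtain ⟨⟨hB, hB'⟩, -⟩ := hp
    refine Prod.ext (?_ : (B ∪ B') ∩ E = B) (?_ : (B ∪ B') ∩ E' = B')
    · rw [union_inter_distrib_right, inter_eq_left.mpr hB,
        disjoint_iff_inter_eq_empty.mp (hdisj.symm.mono_left hB'), union_empty]
    · rw [union_inter_distrib_right, inter_eq_left.mpr hB',
        disjoint_iff_inter_eq_empty.mp (hdisj.mono_left hB), empty_union]
  · intro A hA
    simp only [coe_filter, mem_powerset, Set.mem_ofPred_eq] at hA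
    exact (inter_union_distrib_left _ _ _).symm.trans (inter_eq_left.mpr hA.1)

theorem card_filter_product_add_eq_sum_antidiagonal {β γ M : Type*} [AddMonoid M]
    [HasAntidiagonal M] [DecidableEq M] (P : Finset β) (Q : Finset γ) (f : β → M) (g : γ → M)
    (k : M) :
    #{p ∈ P ×ˢ Q | f p.1 + g p.2 = k} =
      ∑ ij ∈ HasAntidiagonal.antidiagonal k, #{b ∈ P | f b = ij.1} * #{c ∈ Q | g c = ij.2} := by
  rw [card_eq_sum_card_fiberwise (f := fun p => (f p.1, g p.2))
    (t := HasAntidiagonal.antidiagonal k)]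
  · refine sum_congr rfl fun ij hij => ?_
    rw [← card_product, ← filter_product, filter_filter]
    congr 1
    refine filter_congr fun p _ => ?_
    rw [HasAntidiagonal.mem_antidiagonal] at hij
    constructor
    · rintro ⟨-, rfl⟩; exact ⟨rfl, rfl⟩
    · rintro ⟨h1, h2⟩; exact ⟨by rw [h1, h2, hij], Prod.ext h1 h2⟩
  · intro p hp
    simpa using (mem_filter.mp hp).2

/-- The twist polynomial of a direct sum is the product of the twist polynomials: the `k`-th
coefficient of `∂w_{D ⊕ D'}` is the convolution of the coefficients of `∂w_D` and `∂w_{D'}`. -/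
theorem twistPolynomial_directSum (E E' : Finset α) (F F' : Finset (Finset α))
    (hD : IsDeltaMatroid E F) (hD' : IsDeltaMatroid E' F') (hdisj : Disjoint E E') :
    ∀ k : ℕ,
      ((E ∪ E').powerset.filter fun A => width (twist (directSum F F') A) = k).card =
        ∑ p ∈ Finset.HasAntidiagonal.antidiagonal k,
          (E.powerset.filter fun B => width (twist F B) = p.1).card *
          (E'.powerset.filter fun B => width (twist F' B) = p.2).card := by
  intro k
  obtain ⟨hF, hFE, -⟩ := hD
  obtain ⟨hF', hF'E, -⟩ := hD'
  rw [card_filter_powerset_union hdisj, ← card_filter_product_add_eq_sum_antidiagonal]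
  refine congrArg card (filter_congr fun p hp => ?_)
  obtain ⟨hB, hB'⟩ := mem_product.mp hp
  rw [width_twist_union_directSum hF hF' hFE hF'E (mem_powerset.mp hB) (mem_powerset.mp hB')
    hdisj]

end DeltaMatroid

end
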